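/- For λ > 0 and the exponential density f_λ(t) = λ·e^{-λt}, and any bounded measurable function h : [0,∞) → [0,1], the function c ↦ ∫_0^∞ f_λ(t) · h(c - t) dt (with h extended by 0 to negative reals) is Lipschitz continuous on [0,∞) with Lipschitz constant λ. -/

import Mathlib

open Set MeasureTheory

private lemma expDeriv' (lam t : ℝ) :
    HasDerivAt (fun t => -Real.exp (-(lam * t))) (lam * Real.exp (-(lam * t))) t := by
  have h1 : HasDerivAt (fun t : ℝ => -(lam * t)) (-lam) t := by
    simpa using ((hasDerivAt_id t).const_mul lam).fun_neg
  have h2 := h1.exp.fun_neg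
  exact h2.congr_deriv (by ring)

private lemma expInt' (lam : ℝ) {a b : ℝ} (hab : a ≤ b) :
    ∫ t in Set.Ioc a b, lam * Real.exp (-(lam * t)) =
      Real.exp (-(lam * a)) - Real.exp (-(lam * b)) := by
  rw [← intervalIntegral.integral_of_le hab]
  rw [intervalIntegral.integral_eq_sub_of_hasDerivAt (fun t _ => expDeriv' lam t)
    (Continuous.intervalIntegrable (by continuity) a b)]
  ring

/-- For `λ > 0` and a measurable `h : ℝ → [0,1]` vanishing on negatives and
`λ`-Lipschitz on `[0,∞)`, the function `c ↦ ∫_0^∞ λ e^{-λ t} h (c - t) dt`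
is Lipschitz on `[0,∞)` with constant `λ`. -/
theorem stmt_1 (lam : ℝ) (hlam : 0 < lam) (h : ℝ → ℝ)
    (hmeas : Measurable h)
    (hrange : ∀ x, h x ∈ Set.Icc (0 : ℝ) 1)
    (hneg : ∀ x < (0 : ℝ), h x = 0)
    (hlip : ∀ x ∈ Set.Ici (0 : ℝ), ∀ y ∈ Set.Ici (0 : ℝ), |h x - h y| ≤ lam * |x - y|) :
    ∀ c ∈ Set.Ici (0 : ℝ), ∀ c' ∈ Set.Ici (0 : ℝ),
      |(∫ t in Set.Ioi (0 : ℝ), lam * Real.exp (-(lam * t)) * h (c - t)) -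
        (∫ t in Set.Ioi (0 : ℝ), lam * Real.exp (-(lam * t)) * h (c' - t))| ≤
      lam * |c - c'| := by
  set f : ℝ → ℝ := fun t => lam * Real.exp (-(lam * t)) with hf
  have hfpos : ∀ t, 0 < f t := fun t => mul_pos hlam (Real.exp_pos _)
  have hfint : IntegrableOn f (Set.Ioi (0:ℝ)) := by
    have := (exp_neg_integrableOn_Ioi (0:ℝ) hlam).const_mul lam
    simp only [neg_mul] at this
    exact this
  have hint : ∀ d : ℝ, IntegrableOn (fun t => f t * h (d - t)) (Set.Ioi (0:ℝ)) := by
    intro d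
    apply hfint.mono' ((measurable_const.mul ((measurable_const.mul measurable_id).neg.exp)).mul
        (hmeas.comp (measurable_const.sub measurable_id))).aestronglyMeasurable
    filter_upwards with t
    have h1 := (hrange (d - t)).1
    have h2 := (hrange (d - t)).2
    simp only [Function.comp_apply, id_eq, Pi.mul_apply, Pi.neg_apply, Pi.sub_apply]
    rw [Real.norm_eq_abs, abs_mul, abs_of_pos (hfpos t), abs_of_nonneg h1]
    nlinarith [hfpos t]
  -- main case, c ≤ c'
  have main : ∀ c c' : ℝ, 0 ≤ c → c ≤ c' →
      |(∫ t in Set.Ioi (0:ℝ), f t * h (c' - t)) - (∫ t in Set.Ioi (0:ℝ), f t * h (c - t))| ≤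
      lam * (c' - c) := by
    intro c c' hc hcc
    have hc' : (0:ℝ) ≤ c' := hc.trans hcc
    -- F c = ∫ over Ioc 0 c
    have hFc : (∫ t in Set.Ioi (0:ℝ), f t * h (c - t)) =
        ∫ t in Set.Ioc 0 c, f t * h (c - t) := by
      rw [← Set.Ioc_union_Ioi_eq_Ioi hc,
        setIntegral_union (Set.Ioc_disjoint_Ioi le_rfl) measurableSet_Ioi
          ((hint c).mono_set (by rw [← Set.Ioc_union_Ioi_eq_Ioi hc]; exact Set.subset_union_left))
          ((hint c).mono_set (by rw [← Set.Ioc_union_Ioi_eq_Ioi hc]; exact Set.subset_union_right))]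
      have : (∫ t in Set.Ioi c, f t * h (c - t)) = 0 := by
        apply setIntegral_eq_zero_of_forall_eq_zero
        intro t ht
        rw [hneg (c - t) (by simp only [Set.mem_Ioi] at ht; linarith), mul_zero]
      rw [this, add_zero]
    have hFc' : (∫ t in Set.Ioi (0:ℝ), f t * h (c' - t)) =
        (∫ t in Set.Ioc 0 c, f t * h (c' - t)) + ∫ t in Set.Ioc c c', f t * h (c' - t) := by
      have e1 : (∫ t in Set.Ioi (0:ℝ), f t * h (c' - t)) =
          ∫ t in Set.Ioc 0 c', f t * h (c' - t) := by
        rw [← Set.Ioc_union_Ioi_eq_Ioi hc',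
          setIntegral_union (Set.Ioc_disjoint_Ioi le_rfl) measurableSet_Ioi
            ((hint c').mono_set (by rw [← Set.Ioc_union_Ioi_eq_Ioi hc']; exact Set.subset_union_left))
            ((hint c').mono_set (by rw [← Set.Ioc_union_Ioi_eq_Ioi hc']; exact Set.subset_union_right))]
        have : (∫ t in Set.Ioi c', f t * h (c' - t)) = 0 := by
          apply setIntegral_eq_zero_of_forall_eq_zero
          intro t ht
          rw [hneg (c' - t) (by simp only [Set.mem_Ioi] at ht; linarith), mul_zero]
        rw [this, add_zero]
      rw [e1, ← Set.Ioc_union_Ioc_eq_Ioc hc hcc,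
        setIntegral_union (Set.Ioc_disjoint_Ioc_of_le le_rfl) measurableSet_Ioc
          ((hint c').mono_set (fun x hx => hx.1))
          ((hint c').mono_set (fun x hx => lt_of_le_of_lt hc hx.1))]
    -- integrability on the pieces
    have hi1 : ∀ d, IntegrableOn (fun t => f t * h (d - t)) (Set.Ioc 0 c) :=
      fun d => (hint d).mono_set Set.Ioc_subset_Ioi_self
    have hi2 : IntegrableOn (fun t => f t * h (c' - t)) (Set.Ioc c c') :=
      (hint c').mono_set (fun x hx => lt_of_le_of_lt hc hx.1)
    have hfi1 : IntegrableOn f (Set.Ioc 0 c) := hfint.mono_set Set.Ioc_subset_Ioi_self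
    have hfi2 : IntegrableOn f (Set.Ioc c c') :=
      hfint.mono_set (fun x hx => lt_of_le_of_lt hc hx.1)
    -- bound the first difference
    have hA : |∫ t in Set.Ioc 0 c, (f t * h (c' - t) - f t * h (c - t))| ≤
        lam * (c' - c) * (1 - Real.exp (-(lam * c))) := by
      have hb : ‖∫ t in Set.Ioc 0 c, (f t * h (c' - t) - f t * h (c - t))‖ ≤
          ∫ t in Set.Ioc 0 c, (lam * (c' - c)) * f t := by
        apply norm_integral_le_of_norm_le (hfi1.const_mul _)
        rw [ae_restrict_iff' measurableSet_Ioc]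
        filter_upwards with t ht
        simp only [Set.mem_Ioc] at ht
        have hx : c' - t ∈ Set.Ici (0:ℝ) := by simp; linarith
        have hy : c - t ∈ Set.Ici (0:ℝ) := by simp; linarith
        have hl := hlip _ hx _ hy
        rw [show c' - t - (c - t) = c' - c by ring, abs_of_nonneg (by linarith : (0:ℝ) ≤ c' - c)] at hl
        rw [Real.norm_eq_abs, show f t * h (c' - t) - f t * h (c - t) = f t * (h (c' - t) - h (c - t)) by ring,
          abs_mul, abs_of_pos (hfpos t)]
        nlinarith [hfpos t, abs_nonneg (h (c' - t) - h (c - t))]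
      rw [integral_const_mul, expInt' lam hc] at hb
      rw [← Real.norm_eq_abs]
      calc ‖_‖ ≤ _ := hb
        _ = lam * (c' - c) * (1 - Real.exp (-(lam * c))) := by
          rw [mul_zero, neg_zero, Real.exp_zero]
    have hB : |∫ t in Set.Ioc c c', f t * h (c' - t)| ≤
        Real.exp (-(lam * c)) - Real.exp (-(lam * c')) := by
      have hb : ‖∫ t in Set.Ioc c c', f t * h (c' - t)‖ ≤ ∫ t in Set.Ioc c c', f t := by
        apply norm_integral_le_of_norm_le hfi2
        filter_upwards with t
        have h1 := (hrange (c' - t)).1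
        have h2 := (hrange (c' - t)).2
        rw [Real.norm_eq_abs, abs_mul, abs_of_pos (hfpos t), abs_of_nonneg h1]
        nlinarith [hfpos t]
      rw [← Real.norm_eq_abs]
      calc ‖_‖ ≤ _ := hb
        _ = _ := expInt' lam hcc
    -- combine
    have hsub : (∫ t in Set.Ioi (0:ℝ), f t * h (c' - t)) - (∫ t in Set.Ioi (0:ℝ), f t * h (c - t)) =
        (∫ t in Set.Ioc 0 c, (f t * h (c' - t) - f t * h (c - t))) +
          ∫ t in Set.Ioc c c', f t * h (c' - t) := by
      rw [hFc, hFc', integral_sub (hi1 c') (hi1 c)]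
      ring
    rw [hsub]
    have hE : Real.exp (-(lam * c')) = Real.exp (-(lam * c)) * Real.exp (-(lam * (c' - c))) := by
      rw [← Real.exp_add]; ring_nf
    have hexp := Real.add_one_le_exp (-(lam * (c' - c)))
    have hEpos := Real.exp_pos (-(lam * c))
    have hE1 : Real.exp (-(lam * c)) ≤ 1 := Real.exp_le_one_iff.mpr (by nlinarith)
    calc |_ + _| ≤ _ + _ := abs_add_le _ _
      _ ≤ lam * (c' - c) * (1 - Real.exp (-(lam * c))) +
            (Real.exp (-(lam * c)) - Real.exp (-(lam * c'))) := add_le_add hA hB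
      _ ≤ lam * (c' - c) := by nlinarith
  intro c hc c' hc'
  simp only [Set.mem_Ici] at hc hc'
  rcases le_total c c' with hle | hle
  · rw [abs_sub_comm c c', abs_of_nonneg (by linarith : (0:ℝ) ≤ c' - c), abs_sub_comm]
    exact main c c' hc hle
  · rw [abs_of_nonneg (by linarith : (0:ℝ) ≤ c - c')]
    exact main c' c hc' hle
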